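/- Let n ≥ 1, and let β_0,…,β_n and γ_0,…,γ_{n-1} be elements of 𝔊 such that the operator identity (T_i − 1)∘(Σ_{k=0}^n (β_k·)∘T_j^k) = Σ_{k=0}^{n-1} (γ_k·)∘T_j^k∘L holds on 𝔊 (a formal j-integral relation for 𝒥 = Σ β_k·T_j^k). If the Laplace j-invariants H_0,…,H_{n-1} are all nowhere zero, then β_n vanishes identically. (Equivalently: if β_n is not identically zero, then some H_p with p < n fails to be nowhere-vanishing.) -/

import Mathlib

/-!
Discrete (quad-graph) setting: the space `𝔊` is modelled by `QG = ℤ → ℤ → ℝ`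
(functions `φ(i,j)`), with the shifts `Ti`, `Tj`, their inverses, and the
`k`-fold shifts `TiZ k`, `TjZ k`.  For `g : QG`, pointwise multiplication
`g * φ` models the operator `g·`.
-/

/-- The function space `𝔊` of functions `ℤ² → ℝ`. -/
abbrev QG : Type := ℤ → ℤ → ℝ

namespace QG

noncomputable section

/-- The shift operator `T_i(φ)(i,j) = φ(i+1,j)`. -/
def Ti (φ : QG) : QG := fun i j => φ (i + 1) j

/-- The shift operator `T_j(φ)(i,j) = φ(i,j+1)`. -/
def Tj (φ : QG) : QG := fun i j => φ i (j + 1)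

/-- The `k`-fold shift in `i`. -/
def TiZ (k : ℤ) (φ : QG) : QG := fun i j => φ (i + k) j

/-- The `k`-fold shift in `j`. -/
def TjZ (k : ℤ) (φ : QG) : QG := fun i j => φ i (j + k)

/-- The inverse shift `T_i⁻¹`. -/
def TiInv (φ : QG) : QG := fun i j => φ (i - 1) j

/-- The inverse shift `T_j⁻¹`. -/
def TjInv (φ : QG) : QG := fun i j => φ i (j - 1)

/-- A function that is nowhere zero. -/
def NowhereZero (φ : QG) : Prop := ∀ i j, φ i j ≠ 0

/-- The linearization operator `L = T_i∘T_j − a·T_i − b·T_j − c·`. -/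
def L (a b c : QG) (φ : QG) : QG := Ti (Tj φ) - a * Ti φ - b * Tj φ - c * φ

/-- The pair `(b_k, H_k)` of the Laplace j-transformations:
`b_0 = a`, `H_0 = c + b·T_i⁻¹(a)`,
`b_{k+1} = T_i⁻¹(b_k)·T_j(H_k)/H_k`,
`H_{k+1} = T_j(H_k) − T_j^k(b)·b_{k+1} + T_j^{k+1}(b)·T_i⁻¹(b_{k+1})`. -/
def bH (a b c : QG) : ℕ → QG × QG
  | 0 => (a, c + b * TiInv a)
  | k + 1 =>
      let bk := TiInv (bH a b c k).1 * Tj (bH a b c k).2 / (bH a b c k).2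
      (bk, Tj (bH a b c k).2 - TjZ (k : ℤ) b * bk + TjZ ((k : ℤ) + 1) b * TiInv bk)

/-- The function `b_k`. -/
def bj (a b c : QG) (k : ℕ) : QG := (bH a b c k).1

/-- The Laplace j-invariant `H_k`. -/
def Hj (a b c : QG) (k : ℕ) : QG := (bH a b c k).2

/-- The operator `L_k`: `L_0 = L` and
`L_k = (T_i − T_j^k(b)·)∘(T_j − T_i⁻¹(b_k)·) − H_k·` for `k ≥ 1`. -/
def Lk (a b c : QG) : ℕ → QG → QG
  | 0, φ => L a b c φ
  | k + 1, φ =>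
      Ti (Tj φ - TiInv (bj a b c (k + 1)) * φ)
        - TjZ ((k : ℤ) + 1) b * (Tj φ - TiInv (bj a b c (k + 1)) * φ)
        - Hj a b c (k + 1) * φ

/-- `Bo (k+1)` is the operator `B_k = (T_j − T_i⁻¹(b_k)·)∘B_{k-1}`; `Bo 0 = id` is `B_{-1}`. -/
def Bo (a b c : QG) : ℕ → QG → QG
  | 0, φ => φ
  | k + 1, φ => Tj (Bo a b c k φ) - TiInv (bj a b c k) * Bo a b c k φ

/-- `Bbar k` is the operator `B̄_k`: `B̄_0 = id`, `B̄_k = (T_j − b_k·)∘B̄_{k-1}`. -/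
def Bbar (a b c : QG) : ℕ → QG → QG
  | 0, φ => φ
  | k + 1, φ => Tj (Bbar a b c k φ) - bj a b c (k + 1) * Bbar a b c k φ

/-- `Rchain p` is the composition
`((1/H_0)·)∘(T_i − b·)∘((1/H_1)·)∘(T_i − T_j(b)·)∘···∘((1/H_{p-1})·)∘(T_i − T_j^{p-1}(b)·)`
(the identity for `p = 0`). -/
def Rchain (a b c : QG) : ℕ → QG → QG
  | 0, φ => φ
  | k + 1, φ => Rchain a b c k ((1 / Hj a b c k) * (Ti φ - TjZ (k : ℤ) b * φ))

end

/-!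
Comparing the coefficients of `φ` on both sides of the relation, the `γ_k`, extended by zero to
all `k ∈ ℤ`, solve a two-term recursion in `k` (`IsMultiplier`). If `H_0` is nowhere zero,
`laplaceMultiplier`, which comes from the factorization `L = (T_i − b·)∘(T_j − T_i⁻¹(a)·) − H_0·`,
turns a solution for `L` supported in `[0, N)` into one for the Laplace transform `L_1` supported
in `[0, N - 1)`, and it only vanishes on the zero solution. The coefficients of `L_1`, written in
the form of `L`, are `(b_1, T_j b, T_j H_0 − b·b_1)`, whose invariants are `H_1, H_2, …`; so after
`n` transformations `γ = 0`, and the top coefficient gives `β_n = T_j^{n-1}(b)·γ_{n-1} = 0`.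
-/

section

variable (a b c : QG)

theorem Hj_zero_apply (i j : ℤ) : Hj a b c 0 i j = c i j + b i j * a (i - 1) j := rfl

theorem bj_one_apply (i j : ℤ) :
    bj a b c 1 i j = a (i - 1) j * Hj a b c 0 i (j + 1) / Hj a b c 0 i j :=
  rfl

theorem bj_succ (k : ℕ) : bj a b c (k + 1) = TiInv (bj a b c k) * Tj (Hj a b c k) / Hj a b c k :=
  rfl

theorem Hj_succ (k : ℕ) :
    Hj a b c (k + 1) = Tj (Hj a b c k) - TjZ k b * bj a b c (k + 1)
      + TjZ (k + 1) b * TiInv (bj a b c (k + 1)) :=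
  rfl

theorem TjZ_Tj (k : ℤ) (φ : QG) : TjZ k (Tj φ) = TjZ (k + 1) φ := by
  funext i j
  simp only [TjZ, Tj, add_assoc]

theorem bj_Hj_laplace (p : ℕ) :
    bj (bj a b c 1) (Tj b) (Tj (Hj a b c 0) - b * bj a b c 1) p = bj a b c (p + 1) ∧
      Hj (bj a b c 1) (Tj b) (Tj (Hj a b c 0) - b * bj a b c 1) p = Hj a b c (p + 1) := by
  induction p with
  | zero =>
    refine ⟨rfl, ?_⟩
    rw [Hj_succ]
    funext i j
    simp [Hj, bH, TjZ, Tj, bj]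
  | succ p ih =>
    have hb : bj (bj a b c 1) (Tj b) (Tj (Hj a b c 0) - b * bj a b c 1) (p + 1)
        = bj a b c (p + 2) := by
      rw [bj_succ, ih.1, ih.2, ← bj_succ]
    refine ⟨hb, ?_⟩
    rw [Hj_succ, hb, ih.2, TjZ_Tj, TjZ_Tj, Hj_succ a b c (p + 1)]
    push_cast
    rfl

/-- The coefficientwise condition for `Σ_m γ_m·T_j^m ∘ L` to be of the form `(T_i − 1)∘J`.
Indexing by `ℤ` makes `m = -1`, with `γ_{-1} = 0`, the equation for `γ_0`. -/
def IsMultiplier (γ : ℤ → QG) : Prop :=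
  ∀ m i j : ℤ, b (i + 1) (j + m) * γ m (i + 1) j + c (i + 1) (j + m + 1) * γ (m + 1) (i + 1) j
      = γ m i j - a i (j + m + 1) * γ (m + 1) i j

noncomputable def laplaceMultiplier (γ : ℤ → QG) (m : ℤ) : QG := fun i j =>
  (γ m (i - 1) j - b i (j + m) * γ m i j) / Hj a b c 0 i (j + m + 1)

variable {a b c}

theorem IsMultiplier.laplace {γ : ℤ → QG} (hH : NowhereZero (Hj a b c 0))
    (hγ : IsMultiplier a b c γ) :
    IsMultiplier (bj a b c 1) (Tj b) (Tj (Hj a b c 0) - b * bj a b c 1)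
      (laplaceMultiplier a b c γ) := by
  intro m i j
  have h₁ := hγ m i j
  have h₀ := hγ m (i - 1) j
  rw [sub_add_cancel] at h₀
  have hq : j + (m + 1) = j + m + 1 := by ring
  have := hH (i + 1) (j + m + 1)
  have := hH (i + 1) (j + m + 1 + 1)
  have := hH i (j + m + 1)
  have := hH i (j + m + 1 + 1)
  simp only [laplaceMultiplier, bj_one_apply, Pi.sub_apply, Pi.mul_apply, Tj, add_sub_cancel_right,
    hq]
  rw [Hj_zero_apply a b c (i + 1) (j + m + 1), Hj_zero_apply a b c i (j + m + 1),
    add_sub_cancel_right] at *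
  field_simp
  linear_combination
    (-(b (i + 1) (j + m + 1) * (c i (j + m + 1) + b i (j + m + 1) * a (i - 1) (j + m + 1)))) * h₁
      + (c (i + 1) (j + m + 1) + b (i + 1) (j + m + 1) * a i (j + m + 1)) * h₀

theorem IsMultiplier.eq_zero_of_laplaceMultiplier_eq_zero {γ : ℤ → QG}
    (hH : NowhereZero (Hj a b c 0)) (hγ : IsMultiplier a b c γ)
    (hγ' : laplaceMultiplier a b c γ = 0) : γ = 0 := by
  have shift (m i j : ℤ) : γ m (i - 1) j = b i (j + m) * γ m i j := by
    have h := congrFun (congrFun (congrFun hγ' m) i) j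
    simp only [laplaceMultiplier, Pi.zero_apply, div_eq_zero_iff] at h
    exact sub_eq_zero.mp (h.resolve_right (hH i _))
  funext m i j
  obtain ⟨k, rfl⟩ : ∃ k, m = k + 1 := ⟨m - 1, by ring⟩
  have h := hγ k (i - 1) j
  rw [sub_add_cancel, shift k, shift (k + 1), ← add_assoc] at h
  have hm : Hj a b c 0 i (j + k + 1) * γ (k + 1) i j = 0 := by
    rw [Hj_zero_apply]
    linear_combination h
  exact (mul_eq_zero.mp hm).resolve_left (hH i _)

theorem IsMultiplier.eq_zero (N : ℕ) {γ : ℤ → QG} (hγ : IsMultiplier a b c γ)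
    (hneg : ∀ m < 0, γ m = 0) (hN : ∀ m : ℤ, N ≤ m → γ m = 0)
    (hH : ∀ p < N, NowhereZero (Hj a b c p)) : γ = 0 := by
  induction N generalizing a b c γ with
  | zero => exact funext fun m => if h : m < 0 then hneg m h else hN m (by omega)
  | succ N ih =>
    have hH₀ := hH 0 N.succ_pos
    refine hγ.eq_zero_of_laplaceMultiplier_eq_zero hH₀ (ih (hγ.laplace hH₀) ?_ ?_ ?_)
    · intro m hm
      funext i j
      simp [laplaceMultiplier, hneg m hm]
    · intro m hm
      funext i j
      have h := hγ m (i - 1) j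
      rw [hN (m + 1) (by omega), sub_add_cancel] at h
      simp only [Pi.zero_apply, mul_zero, add_zero, sub_zero] at h
      simp [laplaceMultiplier, h]
    · intro p hp
      rw [(bj_Hj_laplace a b c p).2]
      exact hH (p + 1) (by omega)

def extendByZero {M : Type*} [Zero M] (n : ℕ) (f : ℕ → M) (m : ℤ) : M :=
  if 0 ≤ m ∧ m < n then f m.toNat else 0

theorem sum_range_ite_natCast_eq {M : Type*} [AddCommMonoid M] (n : ℕ) (f : ℕ → M) (m : ℤ) :
    (∑ k ∈ Finset.range n, if (k : ℤ) = m then f k else 0) = extendByZero n f m := by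
  unfold extendByZero
  split_ifs with h
  · rw [Finset.sum_eq_single_of_mem m.toNat (Finset.mem_range.2 (by omega))]
    · simp [Int.toNat_of_nonneg h.1]
    · intro k _ hk
      rw [if_neg (by omega)]
  · exact Finset.sum_eq_zero fun k hk => if_neg (by rw [Finset.mem_range] at hk; omega)

theorem extendByZero_apply {α M : Type*} [Zero M] (n : ℕ) (f : ℕ → α → M) (m : ℤ) (x : α) :
    extendByZero n f m x = extendByZero n (fun k => f k x) m := by
  unfold extendByZero
  split_ifs <;> rfl

theorem extendByZero_mul_const {R : Type*} [MulZeroClass R] (n : ℕ) (f : ℕ → R) (r : R) (m : ℤ) :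
    extendByZero n (fun k => f k * r) m = extendByZero n f m * r := by
  unfold extendByZero
  split_ifs <;> simp

def delta (P Q : ℤ) : QG := fun p q => if p = P ∧ q = Q then 1 else 0

variable (a b c) in
def FormalJIntegral (n : ℕ) (β γ : ℕ → QG) : Prop :=
  ∀ φ : QG,
    Ti (∑ k ∈ Finset.range (n + 1), β k * TjZ (k : ℤ) φ)
        - ∑ k ∈ Finset.range (n + 1), β k * TjZ (k : ℤ) φ
      = ∑ k ∈ Finset.range n, γ k * TjZ (k : ℤ) (L a b c φ)

namespace FormalJIntegral

variable {n : ℕ} {β γ : ℕ → QG}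

theorem extendByZero_shift_eq (hJ : FormalJIntegral a b c n β γ) (m i j : ℤ) :
    extendByZero (n + 1) β (m + 1) (i + 1) j
      = extendByZero n γ m i j - a i (j + m + 1) * extendByZero n γ (m + 1) i j := by
  have h := congrFun (congrFun (hJ (delta (i + 1) (j + m + 1))) i) j
  simp +contextual only [add_assoc, Pi.sub_apply, Finset.sum_apply, Pi.mul_apply, Ti, TjZ, delta,
    add_right_inj, true_and, mul_ite, mul_one, mul_zero, sum_range_ite_natCast_eq, left_eq_add,
    one_ne_zero, false_and, ↓reduceIte, Finset.sum_const_zero, sub_zero, L, Tj, add_left_inj,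
    mul_sub, Finset.sum_sub_distrib, extendByZero_mul_const] at h
  simp only [extendByZero_apply, add_assoc, h]
  ring

theorem extendByZero_eq (hJ : FormalJIntegral a b c n β γ) (m i j : ℤ) :
    extendByZero (n + 1) β (m + 1) i j
      = b i (j + m) * extendByZero n γ m i j + c i (j + m + 1) * extendByZero n γ (m + 1) i j := by
  have h := congrFun (congrFun (hJ (delta i (j + m + 1))) i) j
  simp +contextual only [add_assoc, Pi.sub_apply, Finset.sum_apply, Pi.mul_apply, Ti, TjZ, delta,
    add_eq_left, one_ne_zero, add_right_inj, false_and, ↓reduceIte, mul_zero,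
    Finset.sum_const_zero, true_and, mul_ite, mul_one, sum_range_ite_natCast_eq, zero_sub, L, Tj,
    add_left_inj, sub_self, mul_sub, mul_neg, Finset.sum_sub_distrib, Finset.sum_neg_distrib,
    extendByZero_mul_const] at h
  simp only [extendByZero_apply, add_assoc]
  linear_combination -h

theorem isMultiplier (hJ : FormalJIntegral a b c n β γ) :
    IsMultiplier a b c (extendByZero n γ) := by
  intro m i j
  rw [← hJ.extendByZero_eq, hJ.extendByZero_shift_eq]

end FormalJIntegral

end

theorem statement12_general (a b c : QG) (n : ℕ) (β γ : ℕ → QG)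
    (hJ : ∀ φ : QG,
      Ti (∑ k ∈ Finset.range (n + 1), β k * TjZ (k : ℤ) φ)
          - ∑ k ∈ Finset.range (n + 1), β k * TjZ (k : ℤ) φ
        = ∑ k ∈ Finset.range n, γ k * TjZ (k : ℤ) (L a b c φ))
    (hH : ∀ m, m < n → NowhereZero (Hj a b c m)) :
    β n = 0 := by
  have hγ : extendByZero n γ = 0 :=
    (FormalJIntegral.isMultiplier hJ).eq_zero n (fun m hm => if_neg (by omega))
      (fun m hm => if_neg (by omega)) hH
  funext i j
  have h := FormalJIntegral.extendByZero_eq hJ (n - 1) i j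
  rw [sub_add_cancel, hγ] at h
  simpa [extendByZero] using h

/-- Let `n ≥ 1` and `β_0, …, β_n, γ_0, …, γ_{n-1} ∈ 𝔊` satisfy the
formal j-integral relation `(T_i − 1)∘(Σ_{k=0}^n (β_k·)∘T_j^k) = Σ_{k=0}^{n-1} (γ_k·)∘T_j^k∘L`
on `𝔊`.  If the Laplace j-invariants `H_0, …, H_{n-1}` are all nowhere zero, then
`β_n` vanishes identically. -/
theorem statement12 (a b c : QG) (n : ℕ) (hn : 1 ≤ n) (β γ : ℕ → QG)
    (hJ : ∀ φ : QG,
      Ti (∑ k ∈ Finset.range (n + 1), β k * TjZ (k : ℤ) φ)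
          - ∑ k ∈ Finset.range (n + 1), β k * TjZ (k : ℤ) φ
        = ∑ k ∈ Finset.range n, γ k * TjZ (k : ℤ) (L a b c φ))
    (hH : ∀ m, m < n → NowhereZero (Hj a b c m)) :
    β n = 0 :=
  statement12_general a b c n β γ hJ hH

end QG
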